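/- Soundness of the ABox transitional rule: for every RBox R, TBox T, ABox A, individual a, role R and concept C, if the knowledge base (R, T, A ∪ {a:∃R.C}) is satisfiable, then the set of concepts {C} ∪ Trans_R(A ∪ {a:∃R.C}, a, R) ∪ T is satisfiable w.r.t. R and T. -/
import Mathlib


namespace SHI

/-! Syntax and semantics of the description logic SHI. -/

/-- A role is a role name or the inverse of a role name. -/
inductive Role (RN : Type) : Type
  | nm : RN → Role RN
  | inv : RN → Role RN

/-- The inverse (converse) of a role, with `(r⁻)⁻ = r`. -/
def Role.conv {RN : Type} : Role RN → Role RN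
  | .nm r => .inv r
  | .inv r => .nm r

/-- SHI concepts over concept names `CN` and role names `RN`. -/
inductive Concept (CN RN : Type) : Type
  | top : Concept CN RN
  | bot : Concept CN RN
  | atom : CN → Concept CN RN
  | neg : Concept CN RN → Concept CN RN
  | inter : Concept CN RN → Concept CN RN → Concept CN RN
  | union : Concept CN RN → Concept CN RN → Concept CN RN
  | all : Role RN → Concept CN RN → Concept CN RN
  | ex : Role RN → Concept CN RN → Concept CN RN

/-- An interpretation with nonempty domain. -/
structure Interp (CN RN IN : Type) : Type 1 where
  Dom : Type
  dom_nonempty : Nonempty Dom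
  atomI : CN → Set Dom
  roleI : RN → Dom → Dom → Prop
  indI : IN → Dom

/-- Interpretation of roles: `(r⁻)^I = (r^I)⁻¹`. -/
def Interp.rI {CN RN IN : Type} (I : Interp CN RN IN) : Role RN → I.Dom → I.Dom → Prop
  | .nm r => I.roleI r
  | .inv r => fun x y => I.roleI r y x

/-- Interpretation of concepts. -/
def Interp.cI {CN RN IN : Type} (I : Interp CN RN IN) : Concept CN RN → Set I.Dom
  | .top => Set.univ
  | .bot => ∅
  | .atom A => I.atomI A
  | .neg C => (I.cI C)ᶜ
  | .inter C D => I.cI C ∩ I.cI D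
  | .union C D => I.cI C ∪ I.cI D
  | .all R C => {x | ∀ y, I.rI R x y → y ∈ I.cI C}
  | .ex R C => {x | ∃ y, I.rI R x y ∧ y ∈ I.cI C}

/-- Interpretation of a set of concepts: `X^I = {x | x ∈ C^I for all C ∈ X}`. -/
def Interp.sI {CN RN IN : Type} (I : Interp CN RN IN) (X : Set (Concept CN RN)) : Set I.Dom :=
  {x | ∀ C ∈ X, x ∈ I.cI C}

/-- Role axioms: `R ⊑ S` or `R ∘ R ⊑ R`. -/
inductive RoleAxiom (RN : Type) : Type
  | sub : Role RN → Role RN → RoleAxiom RN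
  | tra : Role RN → RoleAxiom RN

/-- Membership in `Ext(R)`, the least extension of an RBox `RB` with the closure rules. -/
inductive ExtMem {RN : Type} (RB : Set (RoleAxiom RN)) : RoleAxiom RN → Prop
  | base {ax : RoleAxiom RN} : ax ∈ RB → ExtMem RB ax
  | refl (S : Role RN) : ExtMem RB (.sub S S)
  | inv_sub {S T : Role RN} : ExtMem RB (.sub S T) → ExtMem RB (.sub S.conv T.conv)
  | inv_tra {S : Role RN} : ExtMem RB (.tra S) → ExtMem RB (.tra S.conv)
  | sub_tra {S T U : Role RN} :
      ExtMem RB (.sub S T) → ExtMem RB (.sub T U) → ExtMem RB (.sub S U)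

/-- `R ⊑_RB S`, i.e. `R ⊑ S ∈ Ext(RB)`. -/
def SubRole {RN : Type} (RB : Set (RoleAxiom RN)) (S T : Role RN) : Prop :=
  ExtMem RB (.sub S T)

/-- An interpretation satisfies a role axiom. -/
def Interp.modelsAxiom {CN RN IN : Type} (I : Interp CN RN IN) : RoleAxiom RN → Prop
  | .sub S T => ∀ x y, I.rI S x y → I.rI T x y
  | .tra S => ∀ x y z, I.rI S x y → I.rI S y z → I.rI S x z

/-- An interpretation is a model of an RBox. -/
def Interp.modelsRBox {CN RN IN : Type} (I : Interp CN RN IN) (RB : Set (RoleAxiom RN)) : Prop :=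
  ∀ ax ∈ RB, I.modelsAxiom ax

/-- A model of a TBox, whose concepts are treated as global assumptions. -/
def Interp.modelsTBox {CN RN IN : Type} (I : Interp CN RN IN) (TB : Set (Concept CN RN)) : Prop :=
  ∀ C ∈ TB, I.cI C = Set.univ

/-- `Trans_RB(X, R)` for a set `X` of concepts. -/
def transferC {CN RN : Type} (RB : Set (RoleAxiom RN)) (X : Set (Concept CN RN)) (R : Role RN) :
    Set (Concept CN RN) :=
  {D | Concept.all R D ∈ X} ∪
    {C | ∃ S D, C = Concept.all S D ∧ Concept.all S D ∈ X ∧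
      SubRole RB R S ∧ ExtMem RB (.tra S)}

/-- Satisfiability of a set of concepts w.r.t. an RBox and a TBox. -/
def SatWrt (CN RN IN : Type) (RB : Set (RoleAxiom RN)) (TB : Set (Concept CN RN))
    (X : Set (Concept CN RN)) : Prop :=
  ∃ I : Interp CN RN IN, I.modelsRBox RB ∧ I.modelsTBox TB ∧ (I.sI X).Nonempty

/-- ABox assertions: `a:C` or `R(a,b)`. -/
inductive Assertion (CN RN IN : Type) : Type
  | conc : IN → Concept CN RN → Assertion CN RN IN
  | rel : Role RN → IN → IN → Assertion CN RN IN

def Interp.modelsAssertion {CN RN IN : Type} (I : Interp CN RN IN) : Assertion CN RN IN → Prop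
  | .conc a C => I.indI a ∈ I.cI C
  | .rel R a b => I.rI R (I.indI a) (I.indI b)

/-- An interpretation is a model of an ABox. -/
def Interp.modelsABox {CN RN IN : Type} (I : Interp CN RN IN)
    (AB : Set (Assertion CN RN IN)) : Prop :=
  ∀ φ ∈ AB, I.modelsAssertion φ

/-- Satisfiability of a knowledge base `(RB, TB, AB)`. -/
def KBSat (CN RN IN : Type) (RB : Set (RoleAxiom RN)) (TB : Set (Concept CN RN))
    (AB : Set (Assertion CN RN IN)) : Prop :=
  ∃ I : Interp CN RN IN, I.modelsRBox RB ∧ I.modelsTBox TB ∧ I.modelsABox AB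

/-- `Trans_RB(Y, a, R, b)` for a set `Y` of ABox assertions. -/
def transferAB {CN RN IN : Type} (RB : Set (RoleAxiom RN)) (Y : Set (Assertion CN RN IN))
    (a : IN) (R : Role RN) (b : IN) : Set (Assertion CN RN IN) :=
  {φ | ∃ D, φ = Assertion.conc b D ∧ Assertion.conc a (Concept.all R D) ∈ Y} ∪
    {φ | ∃ S D, φ = Assertion.conc b (Concept.all S D) ∧
      Assertion.conc a (Concept.all S D) ∈ Y ∧ SubRole RB R S ∧ ExtMem RB (.tra S)}

/-- `Trans_RB(Y, a, R)` (a set of concepts) for a set `Y` of ABox assertions. -/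
def transferAC {CN RN IN : Type} (RB : Set (RoleAxiom RN)) (Y : Set (Assertion CN RN IN))
    (a : IN) (R : Role RN) : Set (Concept CN RN) :=
  {D | Assertion.conc a (Concept.all R D) ∈ Y} ∪
    {C | ∃ S D, C = Concept.all S D ∧ Assertion.conc a (Concept.all S D) ∈ Y ∧
      SubRole RB R S ∧ ExtMem RB (.tra S)}

/-- A family `E'` of relations extends `E`, respects converses, the role hierarchy of `RB`,
and transitivity axioms of `Ext(RB)`. -/
def ClosedFam {RN Δ : Type} (RB : Set (RoleAxiom RN)) (E E' : Role RN → Δ → Δ → Prop) : Prop :=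
  (∀ R x y, E R x y → E' R x y) ∧
  (∀ R x y, E' R.conv x y ↔ E' R y x) ∧
  (∀ R S, SubRole RB R S → ∀ x y, E' R x y → E' S x y) ∧
  (∀ R, ExtMem RB (.tra R) → ∀ x y z, E' R x y → E' R y z → E' R x z)

/-- An `RB`-saturated model graph `(Δ, Cmap, E)`. -/
def Saturated {CN RN Δ : Type} (RB : Set (RoleAxiom RN)) (Cmap : Δ → Set (Concept CN RN))
    (E : Role RN → Δ → Δ → Prop) : Prop :=
  ∀ x : Δ,
    (∀ C D : Concept CN RN, Concept.inter C D ∈ Cmap x → C ∈ Cmap x ∧ D ∈ Cmap x) ∧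
    (∀ C D : Concept CN RN, Concept.union C D ∈ Cmap x → C ∈ Cmap x ∨ D ∈ Cmap x) ∧
    (∀ (R S : Role RN) (C : Concept CN RN),
      Concept.all S C ∈ Cmap x → SubRole RB R S → Concept.all R C ∈ Cmap x) ∧
    (∀ (R : Role RN) (y : Δ), E R x y → transferC RB (Cmap x) R ⊆ Cmap y) ∧
    (∀ (R : Role RN) (y : Δ), E R x y → transferC RB (Cmap y) R.conv ⊆ Cmap x) ∧
    (∀ (R : Role RN) (C : Concept CN RN),
      Concept.ex R C ∈ Cmap x → ∃ y : Δ, E R x y ∧ C ∈ Cmap y)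

/-- A consistent model graph: no label contains `⊥` or a pair `A, ¬A`. -/
def ConsistentMG {CN RN Δ : Type} (Cmap : Δ → Set (Concept CN RN)) : Prop :=
  ∀ x : Δ, Concept.bot ∉ Cmap x ∧
    ∀ A : CN, ¬ (Concept.atom A ∈ Cmap x ∧ Concept.neg (Concept.atom A) ∈ Cmap x)

/-- The interpretation corresponding to a model graph, built from a family `E'` of relations:
the domain is `Δ`, `a^I = a` (via `ind`), `A^I = {x | A ∈ Cmap x}` and `r^I = E'(r)`. -/
def mgInterp (CN RN IN Δ : Type) [Nonempty Δ] (ind : IN → Δ)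
    (Cmap : Δ → Set (Concept CN RN)) (E' : Role RN → Δ → Δ → Prop) : Interp CN RN IN :=
  ⟨Δ, ‹Nonempty Δ›, fun A => {z | Concept.atom A ∈ Cmap z}, fun r => E' (.nm r), ind⟩

/-- A concept is in negation normal form: negation occurs only directly before concept names. -/
def Concept.isNNF {CN RN : Type} : Concept CN RN → Prop
  | .neg (.atom _) => True
  | .neg _ => False
  | .inter C D => C.isNNF ∧ D.isNNF
  | .union C D => C.isNNF ∧ D.isNNF
  | .all _ C => C.isNNF
  | .ex _ C => C.isNNF
  | _ => True


lemma rI_conv {CN RN IN : Type} (I : Interp CN RN IN) (R : Role RN) (x y : I.Dom) :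
    I.rI R.conv x y ↔ I.rI R y x := by
  cases R <;> simp [Role.conv, Interp.rI]

lemma ext_sound {CN RN IN : Type} {RB : Set (RoleAxiom RN)} {I : Interp CN RN IN}
    (hI : I.modelsRBox RB) {ax : RoleAxiom RN} (hax : ExtMem RB ax) :
    @Interp.modelsAxiom CN RN IN I ax := by
  induction hax with
  | base h => exact hI _ h
  | refl S => exact fun x y h => h
  | inv_sub _ ih => exact fun x y h =>
      (rI_conv I _ _ _).2 (ih _ _ ((rI_conv I _ _ _).1 h))
  | inv_tra _ ih => exact fun x y z h1 h2 =>
      (rI_conv I _ _ _).2 (ih _ _ _ ((rI_conv I _ _ _).1 h2) ((rI_conv I _ _ _).1 h1))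
  | sub_tra _ _ ih1 ih2 => exact fun x y h => ih2 _ _ (ih1 _ _ h)

/-- soundness of the ABox transitional rule. -/
theorem abox_trans_rule (CN RN IN : Type) (RB : Set (RoleAxiom RN)) (hRB : RB.Finite)
    (TB : Set (Concept CN RN)) (hTB : TB.Finite)
    (AB : Set (Assertion CN RN IN)) (hAB : AB.Finite)
    (a : IN) (R : Role RN) (C : Concept CN RN)
    (h : KBSat CN RN IN RB TB (AB ∪ {Assertion.conc a (Concept.ex R C)})) :
    SatWrt CN RN IN RB TB
      ({C} ∪ transferAC RB (AB ∪ {Assertion.conc a (Concept.ex R C)}) a R ∪ TB) := by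
  obtain ⟨I, hR, hT, hA⟩ := h
  have hex : I.indI a ∈ I.cI (Concept.ex R C) :=
    hA _ (Or.inr rfl)
  obtain ⟨y, hRy, hyC⟩ := hex
  refine ⟨I, hR, hT, y, ?_⟩
  intro D hD
  rcases hD with (hD | hD) | hD
  · -- D ∈ {C}
    rcases hD with rfl
    exact hyC
  · rcases hD with hD | ⟨S, E, rfl, hmem, hsub, htra⟩
    · -- a : ∀R.D ∈ Y
      exact hA _ hD y hRy
    · -- D = ∀S.E, a : ∀S.E ∈ Y, R ⊑ S, S transitive
      intro z hz
      have hsubI := ext_sound hR hsub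
      have htraI := ext_sound hR htra
      have hSay : I.rI S (I.indI a) y := hsubI _ _ hRy
      exact hA _ hmem z (htraI _ _ _ hSay hz)
  · -- D ∈ TB
    have := hT D hD
    simp [this]

end SHI
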